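/- Variance reduction from regression adjustment with known nuisances: with $D$ Bernoulli($\pi(S)$) conditional on $(S,X)$, $B\in[0,1]$ conditionally independent of $D$ given $(S,X)$, $m=\mathbb{E}[B\mid S,X]$, the adjusted score $Z_{adj}=\frac{D(B-m)}{\pi(S)}+m$ and unadjusted score $Z_{emp}=\frac{D\,B}{\pi(S)}$ both have mean $\mathbb{E}[B]$, and $\mathrm{Var}(Z_{adj}) \le \mathrm{Var}(Z_{emp})$. -/

import Mathlib

open MeasureTheory ProbabilityTheory
open scoped ENNReal

/-!
Condition on `𝔪 = σ(S, X)`. Conditional independence factorises `E[D B | 𝔪] = π(S) m`: it is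
stated for events, so the factorisation holds first for `B` replaced by the indicators of
`{B ∈ t}`, and passes to `B` by comparing conditional expectations given `σ(B)`. Hence both
`D - π(S)` and `D (B - m)` are conditionally centred, and hence orthogonal to every bounded
`𝔪`-measurable function. Now `Z_adj = D (B - m) / π(S) + m` and
`Z_emp - Z_adj = (m / π(S)) (D - π(S))`, so both scores have mean `E[m] = E[B]`. Because `D² = D`,
the product `Z_adj (Z_emp - Z_adj)` is again an `𝔪`-measurable combination of the two centred
variables, so `Z_adj` and `Z_emp - Z_adj` are uncorrelated and
`Var Z_emp = Var Z_adj + Var (Z_emp - Z_adj)`.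
-/

lemma memLp_top_of_forall_eq_zero_or_eq_one {Ω : Type*} {mΩ : MeasurableSpace Ω}
    {μ : Measure Ω} {D : Ω → ℝ} (hD : Measurable D)
    (hD01 : ∀ ω, D ω = 0 ∨ D ω = 1) : MemLp D ∞ μ :=
  memLp_top_of_bound hD.aestronglyMeasurable 1
    (ae_of_all _ fun ω => by rcases hD01 ω with h | h <;> simp [h])

section ConditionalExpectation

variable {Ω : Type*} {m mΩ : MeasurableSpace Ω} {μ : Measure Ω} [IsFiniteMeasure μ]

lemma setIntegral_mul_condExp (hm : m ≤ mΩ) {u f : Ω → ℝ} (hu : StronglyMeasurable[m] u)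
    (hu_top : MemLp u ∞ μ) (hf : Integrable f μ) {s : Set Ω} (hs : MeasurableSet[m] s) :
    ∫ ω in s, u ω * μ[f|m] ω ∂μ = ∫ ω in s, u ω * f ω ∂μ := by
  have huf : Integrable (u * f) μ := hf.mul_of_top_right hu_top
  calc ∫ ω in s, u ω * μ[f|m] ω ∂μ = ∫ ω in s, μ[u * f|m] ω ∂μ :=
        setIntegral_congr_ae (hm s hs)
          ((condExp_mul_of_stronglyMeasurable_left hu huf hf).mono fun _ h _ => h.symm)
    _ = ∫ ω in s, u ω * f ω ∂μ := setIntegral_condExp hm huf hs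

lemma integral_mul_eq_zero_of_condExp_ae_eq_zero (hm : m ≤ mΩ) {u f : Ω → ℝ}
    (hu : StronglyMeasurable[m] u) (hu_top : MemLp u ∞ μ) (hf : Integrable f μ)
    (hf0 : μ[f|m] =ᵐ[μ] 0) :
    ∫ ω, (u * f) ω ∂μ = 0 := by
  have h := setIntegral_mul_condExp hm hu hu_top hf MeasurableSet.univ
  rw [setIntegral_univ, setIntegral_univ] at h
  calc ∫ ω, (u * f) ω ∂μ = ∫ ω, u ω * μ[f|m] ω ∂μ := h.symm
    _ = 0 := integral_eq_zero_of_ae (by filter_upwards [hf0] with ω hω; simp [hω])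

lemma integral_mul_eq_of_setIntegral_preimage_eq {f g B : Ω → ℝ} (hB : Measurable B)
    (hf : Integrable f μ) (hg : Integrable g μ) (hfB : Integrable (f * B) μ)
    (hgB : Integrable (g * B) μ)
    (h : ∀ t, MeasurableSet t → ∫ ω in B ⁻¹' t, f ω ∂μ = ∫ ω in B ⁻¹' t, g ω ∂μ) :
    ∫ ω, f ω * B ω ∂μ = ∫ ω, g ω * B ω ∂μ := by
  set mB : MeasurableSpace Ω := MeasurableSpace.comap B inferInstance
  have hmB : mB ≤ mΩ := hB.comap_le
  have hB_mB : StronglyMeasurable[mB] B := (comap_measurable B).stronglyMeasurable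
  have hfg : μ[f|mB] =ᵐ[μ] μ[g|mB] := by
    refine ae_eq_condExp_of_forall_setIntegral_eq hmB hg
      (fun _ _ _ => integrable_condExp.integrableOn) ?_
      stronglyMeasurable_condExp.aestronglyMeasurable
    rintro _ ⟨t, ht, rfl⟩ _
    rw [setIntegral_condExp hmB hf ⟨t, ht, rfl⟩]
    exact h t ht
  have pull_out : ∀ F : Ω → ℝ, Integrable F μ → Integrable (F * B) μ →
      ∫ ω, F ω * B ω ∂μ = ∫ ω, (μ[F|mB] * B) ω ∂μ := fun F hF hFB => by
    rw [← integral_condExp hmB]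
    exact integral_congr_ae (condExp_mul_of_stronglyMeasurable_right hB_mB hFB hF)
  rw [pull_out f hf hfB, pull_out g hg hgB]
  exact integral_congr_ae (hfg.mul .rfl)

lemma setIntegral_condExp_eq_of_condIndepFun [StandardBorelSpace Ω] (hm : m ≤ mΩ)
    {D B : Ω → ℝ} (hD : Measurable D) (hB : Measurable B) (hD01 : ∀ ω, D ω = 0 ∨ D ω = 1)
    (hDB : CondIndepFun m hm D B μ) {s : Set Ω} (hs : MeasurableSet[m] s) {t : Set ℝ}
    (ht : MeasurableSet t) :
    ∫ ω in s ∩ B ⁻¹' t, μ[D|m] ω ∂μ = ∫ ω in s ∩ B ⁻¹' t, D ω ∂μ := by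
  set A := D ⁻¹' {1}
  have hD_ind : D = A.indicator fun _ => (1 : ℝ) :=
    funext fun ω => by rcases hD01 ω with h | h <;> simp [A, h]
  have hfactor : μ⟦A ∩ B ⁻¹' t | m⟧ =ᵐ[μ] μ[D|m] * μ⟦B ⁻¹' t | m⟧ := by
    have := (condIndepFun_iff_condExp_inter_preimage_eq_mul hD hB).mp hDB {1} t
      (measurableSet_singleton 1) ht
    rwa [← hD_ind] at this
  have hq_top : MemLp μ[D|m] ∞ μ :=
    (memLp_top_of_forall_eq_zero_or_eq_one hD hD01).condExp le_top
  rw [← setIntegral_indicator (hB ht), ← setIntegral_indicator (hB ht)]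
  calc ∫ ω in s, (B ⁻¹' t).indicator μ[D|m] ω ∂μ
      = ∫ ω in s, μ[D|m] ω * (μ⟦B ⁻¹' t | m⟧) ω ∂μ := by
        rw [setIntegral_mul_condExp hm stronglyMeasurable_condExp hq_top
          ((integrable_const 1).indicator (hB ht)) hs]
        congr 1 with ω
        by_cases hω : ω ∈ B ⁻¹' t <;> simp [hω]
    _ = ∫ ω in s, (μ⟦A ∩ B ⁻¹' t | m⟧) ω ∂μ :=
        setIntegral_congr_ae (hm s hs) (hfactor.mono fun _ h _ => h.symm)
    _ = ∫ ω in s, (B ⁻¹' t).indicator D ω ∂μ := by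
        rw [setIntegral_condExp hm
          ((integrable_const 1).indicator ((hD (measurableSet_singleton 1)).inter (hB ht))) hs,
          hD_ind, Set.indicator_indicator, Set.inter_comm]

lemma condExp_mul_ae_eq_of_condIndepFun [StandardBorelSpace Ω] (hm : m ≤ mΩ) {D B : Ω → ℝ}
    (hD : Measurable D) (hB : Measurable B) (hD01 : ∀ ω, D ω = 0 ∨ D ω = 1)
    (hB_int : Integrable B μ) (hDB : CondIndepFun m hm D B μ) :
    μ[D * B|m] =ᵐ[μ] μ[D|m] * μ[B|m] := by
  have hD_top : MemLp D ∞ μ := memLp_top_of_forall_eq_zero_or_eq_one hD hD01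
  have hq : StronglyMeasurable[m] μ[D|m] := stronglyMeasurable_condExp
  have hq_top : MemLp μ[D|m] ∞ μ := hD_top.condExp le_top
  refine (ae_eq_condExp_of_forall_setIntegral_eq hm (hB_int.mul_of_top_right hD_top)
    (fun _ _ _ => (integrable_condExp.mul_of_top_right hq_top).integrableOn) (fun s hs _ => ?_)
    (hq.mul stronglyMeasurable_condExp).aestronglyMeasurable).symm
  calc ∫ ω in s, (μ[D|m] * μ[B|m]) ω ∂μ = ∫ ω in s, μ[D|m] ω * B ω ∂μ :=
        setIntegral_mul_condExp hm hq hq_top hB_int hs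
    _ = ∫ ω in s, D ω * B ω ∂μ := by
        refine integral_mul_eq_of_setIntegral_preimage_eq hB integrable_condExp.restrict
          (hD_top.integrable le_top).restrict (hB_int.mul_of_top_right hq_top).restrict
          (hB_int.mul_of_top_right hD_top).restrict fun t ht => ?_
        rw [Measure.restrict_restrict (hB ht), Set.inter_comm]
        exact setIntegral_condExp_eq_of_condIndepFun hm hD hB hD01 hDB hs ht

lemma condExp_sub_ae_eq_zero_of_condExp_ae_eq (hm : m ≤ mΩ) {f g : Ω → ℝ}
    (hg : StronglyMeasurable[m] g) (hf : Integrable f μ) (hfg : μ[f|m] =ᵐ[μ] g) :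
    μ[f - g|m] =ᵐ[μ] 0 := by
  have hg_int : Integrable g μ := integrable_condExp.congr hfg
  filter_upwards [condExp_sub hf hg_int m, hfg] with ω h_sub h_fg
  simp [h_sub, h_fg, condExp_of_stronglyMeasurable hm hg hg_int]

lemma condExp_mul_sub_condExp_ae_eq_zero {D B : Ω → ℝ} (hD : MemLp D ∞ μ)
    (hB : Integrable B μ) (hDB : μ[D * B|m] =ᵐ[μ] μ[D|m] * μ[B|m]) :
    μ[D * (B - μ[B|m])|m] =ᵐ[μ] 0 := by
  have hBD : Integrable (μ[B|m] * D) μ := integrable_condExp.mul_of_top_left hD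
  have h_pull : μ[μ[B|m] * D|m] =ᵐ[μ] μ[B|m] * μ[D|m] :=
    condExp_mul_of_stronglyMeasurable_left stronglyMeasurable_condExp hBD (hD.integrable le_top)
  rw [mul_sub, mul_comm D μ[B|m]]
  filter_upwards [condExp_sub (hB.mul_of_top_right hD) hBD m, h_pull, hDB] with ω h_sub h_pull h_DB
  simp only [h_sub, h_pull, h_DB, Pi.sub_apply, Pi.mul_apply, Pi.zero_apply]
  ring

end ConditionalExpectation

section Variance

variable {Ω : Type*} {mΩ : MeasurableSpace Ω} {μ : Measure Ω} [IsProbabilityMeasure μ]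

lemma variance_le_variance_add {X W : Ω → ℝ} (hX : MemLp X 2 μ) (hW : MemLp W 2 μ)
    (hW0 : ∫ ω, W ω ∂μ = 0) (hXW : ∫ ω, X ω * W ω ∂μ = 0) :
    variance X μ ≤ variance (X + W) μ := by
  rw [variance_add hX hW, covariance_eq_sub hX hW]
  simp only [Pi.mul_apply, hXW, hW0, mul_zero, sub_zero]
  linarith [variance_nonneg W μ]

end Variance

section Scores

variable {Ω : Type*}

/-- `ipwScore D B p` and `aipwScore D B p r` are `Z_emp` and `Z_adj` for the propensity `p = π(S)`
and the regression function `r = m`. -/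
noncomputable def ipwScore (D B p : Ω → ℝ) : Ω → ℝ := fun ω => D ω * B ω / p ω

noncomputable def aipwScore (D B p r : Ω → ℝ) : Ω → ℝ :=
  fun ω => D ω * (B ω - r ω) / p ω + r ω

lemma ipwScore_eq (D B p : Ω → ℝ) : ipwScore D B p = p⁻¹ * (D * B) :=
  funext fun ω => by
    simp only [ipwScore, Pi.mul_apply, Pi.inv_apply]
    ring

lemma aipwScore_eq (D B p r : Ω → ℝ) : aipwScore D B p r = p⁻¹ * (D * (B - r)) + r :=
  funext fun ω => by
    simp only [aipwScore, Pi.add_apply, Pi.mul_apply, Pi.sub_apply, Pi.inv_apply]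
    ring

lemma ipwScore_sub_aipwScore {D B p : Ω → ℝ} (r : Ω → ℝ) (hp : ∀ ω, p ω ≠ 0) :
    ipwScore D B p - aipwScore D B p r = r * p⁻¹ * (D - p) :=
  funext fun ω => by
    simp only [ipwScore, aipwScore, Pi.sub_apply, Pi.mul_apply, Pi.inv_apply]
    field_simp [hp ω]
    ring

lemma aipwScore_mul_ipwScore_sub_aipwScore {D B p : Ω → ℝ} (r : Ω → ℝ)
    (hD01 : ∀ ω, D ω = 0 ∨ D ω = 1) (hp : ∀ ω, p ω ≠ 0) :
    aipwScore D B p r * (ipwScore D B p - aipwScore D B p r)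
      = (r * p⁻¹ * p⁻¹ - r * p⁻¹) * (D * (B - r)) + r * r * p⁻¹ * (D - p) := by
  rw [ipwScore_sub_aipwScore r hp, aipwScore_eq]
  funext ω
  simp only [Pi.add_apply, Pi.mul_apply, Pi.sub_apply, Pi.inv_apply]
  have hpω := hp ω
  rcases hD01 ω with h | h <;> rw [h] <;> field_simp
  ring

variable [MeasurableSpace Ω] {μ : Measure Ω}

lemma memLp_top_ipwScore {D B p : Ω → ℝ} (hD : Measurable D) (hD01 : ∀ ω, D ω = 0 ∨ D ω = 1)
    (hB : MemLp B ∞ μ) (hp_inv : MemLp p⁻¹ ∞ μ) : MemLp (ipwScore D B p) ∞ μ := by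
  rw [ipwScore_eq]
  exact (MemLp.mul (r := ∞) hB (memLp_top_of_forall_eq_zero_or_eq_one hD hD01)).mul hp_inv

lemma memLp_top_aipwScore {D B p r : Ω → ℝ} (hD : Measurable D)
    (hD01 : ∀ ω, D ω = 0 ∨ D ω = 1) (hB : MemLp B ∞ μ) (hr : MemLp r ∞ μ)
    (hp_inv : MemLp p⁻¹ ∞ μ) : MemLp (aipwScore D B p r) ∞ μ := by
  rw [aipwScore_eq]
  exact ((MemLp.mul (r := ∞) (hB.sub hr) (memLp_top_of_forall_eq_zero_or_eq_one hD hD01)).mul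
    hp_inv).add hr

end Scores

section Moments

variable {Ω : Type*} {m mΩ : MeasurableSpace Ω} {μ : Measure Ω} [IsProbabilityMeasure μ]

theorem aipwScore_integral_and_variance_le (hm : m ≤ mΩ) {D B p : Ω → ℝ} (hD : Measurable D)
    (hD01 : ∀ ω, D ω = 0 ∨ D ω = 1) (hB : MemLp B ∞ μ) (hp : StronglyMeasurable[m] p)
    (hp0 : ∀ ω, p ω ≠ 0) (hp_int : Integrable p μ) (hp_inv : MemLp p⁻¹ ∞ μ)
    (hD_cent : μ[D - p|m] =ᵐ[μ] 0) (hDB_cent : μ[D * (B - μ[B|m])|m] =ᵐ[μ] 0) :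
    ∫ ω, aipwScore D B p μ[B|m] ω ∂μ = ∫ ω, B ω ∂μ ∧
      ∫ ω, ipwScore D B p ω ∂μ = ∫ ω, B ω ∂μ ∧
      variance (aipwScore D B p μ[B|m]) μ ≤ variance (ipwScore D B p) μ := by
  set r := μ[B|m]
  have hr : StronglyMeasurable[m] r := stronglyMeasurable_condExp
  have hr_top : MemLp r ∞ μ := hB.condExp le_top
  have hp_inv_m : StronglyMeasurable[m] p⁻¹ := hp.measurable.inv.stronglyMeasurable
  have hD_top : MemLp D ∞ μ := memLp_top_of_forall_eq_zero_or_eq_one hD hD01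
  have hX₁ : Integrable (D - p) μ := (hD_top.integrable le_top).sub hp_int
  have hX₂ : Integrable (D * (B - r)) μ :=
    ((hB.sub hr_top).integrable le_top).mul_of_top_right hD_top
  have hc₀ : MemLp (r * p⁻¹) ∞ μ := MemLp.mul (r := ∞) hp_inv hr_top
  have hc₁ : MemLp (r * p⁻¹ * p⁻¹ - r * p⁻¹) ∞ μ := (hp_inv.mul hc₀).sub hc₀
  have hc₂ : MemLp (r * r * p⁻¹) ∞ μ := MemLp.mul (r := ∞) hp_inv (MemLp.mul (r := ∞) hr_top hr_top)
  have hadj_top := memLp_top_aipwScore hD hD01 hB hr_top hp_inv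
  have hdiff_top := (memLp_top_ipwScore hD hD01 hB hp_inv).sub hadj_top
  have hI_adj : ∫ ω, aipwScore D B p r ω ∂μ = ∫ ω, B ω ∂μ := by
    rw [aipwScore_eq, integral_add' (hX₂.mul_of_top_right hp_inv) (hr_top.integrable le_top),
      integral_mul_eq_zero_of_condExp_ae_eq_zero hm hp_inv_m hp_inv hX₂ hDB_cent,
      integral_condExp hm, zero_add]
  have hI_diff : ∫ ω, (ipwScore D B p - aipwScore D B p r) ω ∂μ = 0 := by
    rw [ipwScore_sub_aipwScore r hp0]
    exact integral_mul_eq_zero_of_condExp_ae_eq_zero hm (hr.mul hp_inv_m) hc₀ hX₁ hD_cent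
  have hI_cross :
      ∫ ω, (aipwScore D B p r * (ipwScore D B p - aipwScore D B p r)) ω ∂μ = 0 := by
    rw [aipwScore_mul_ipwScore_sub_aipwScore r hD01 hp0,
      integral_add' (hX₂.mul_of_top_right hc₁) (hX₁.mul_of_top_right hc₂),
      integral_mul_eq_zero_of_condExp_ae_eq_zero hm
        (((hr.mul hp_inv_m).mul hp_inv_m).sub (hr.mul hp_inv_m)) hc₁ hX₂ hDB_cent,
      integral_mul_eq_zero_of_condExp_ae_eq_zero hm ((hr.mul hr).mul hp_inv_m) hc₂ hX₁ hD_cent,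
      add_zero]
  have hipw : ipwScore D B p = aipwScore D B p r + (ipwScore D B p - aipwScore D B p r) :=
    (add_sub_cancel _ _).symm
  refine ⟨hI_adj, ?_, ?_⟩
  · rw [hipw, integral_add' (hadj_top.integrable le_top) (hdiff_top.integrable le_top), hI_adj,
      hI_diff, add_zero]
  · rw [hipw]
    exact variance_le_variance_add (hadj_top.mono_exponent le_top)
      (hdiff_top.mono_exponent le_top) hI_diff hI_cross

end Moments

/-- Variance reduction from regression adjustment with known nuisances: the
adjusted score `Z_adj = D(B-m)/π(S) + m` and the unadjusted score `Z_emp = DB/π(S)` both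
have mean `E[B]`, and `Var(Z_adj) ≤ Var(Z_emp)`. -/
theorem regression_adjustment_variance_reduction
    {Ω : Type*} [mΩ : MeasurableSpace Ω] [hSB : StandardBorelSpace Ω]
    (μ : Measure Ω) [hμ : IsProbabilityMeasure μ]
    {𝒮 : Type*} [Fintype 𝒮] [MeasurableSpace 𝒮] [MeasurableSingletonClass 𝒮]
    {𝒳 : Type*} [MeasurableSpace 𝒳]
    (S : Ω → 𝒮) (X : Ω → 𝒳)
    (𝔪 : MeasurableSpace Ω)
    (h𝔪 : 𝔪 = MeasurableSpace.comap (fun ω => (S ω, X ω)) inferInstance)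
    (h𝔪le : 𝔪 ≤ mΩ)
    (D B : Ω → ℝ) (hD : @Measurable Ω ℝ mΩ _ D) (hB : @Measurable Ω ℝ mΩ _ B)
    (hD01 : ∀ ω, D ω = 0 ∨ D ω = 1) (hB01 : ∀ ω, B ω ∈ Set.Icc (0:ℝ) 1)
    (π : 𝒮 → ℝ) (hπ01 : ∀ s, 0 < π s ∧ π s < 1)
    -- D is Bernoulli(π(S)) conditionally on (S, X):
    (hbern : μ[D | 𝔪] =ᵐ[μ] fun ω => π (S ω))
    -- D and B are conditionally independent given (S, X):
    (hci : @CondIndepFun Ω 𝔪 mΩ hSB h𝔪le ℝ ℝ _ _ D B μ (by infer_instance))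
    (m Zadj Zemp : Ω → ℝ)
    (hm : m = μ[B | 𝔪])
    (hZadj : ∀ ω, Zadj ω = D ω * (B ω - m ω) / π (S ω) + m ω)
    (hZemp : ∀ ω, Zemp ω = D ω * B ω / π (S ω)) :
    (∫ ω, Zadj ω ∂μ) = (∫ ω, B ω ∂μ)
      ∧ (∫ ω, Zemp ω ∂μ) = (∫ ω, B ω ∂μ)
      ∧ variance Zadj μ ≤ variance Zemp μ := by
  obtain rfl : Zadj = aipwScore D B (fun ω => π (S ω)) m := funext hZadj
  obtain rfl : Zemp = ipwScore D B (fun ω => π (S ω)) := funext hZemp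
  subst hm
  have hπ_pos : ∀ s, 0 < π s := fun s => (hπ01 s).1
  have hp : StronglyMeasurable[𝔪] fun ω => π (S ω) := by
    subst h𝔪
    exact ((measurable_of_finite π).comp (comap_measurable _).fst).stronglyMeasurable
  have hp_inv : MemLp (fun ω => π (S ω))⁻¹ ∞ μ :=
    memLp_top_of_bound (hp.mono h𝔪le).measurable.inv.aestronglyMeasurable (∑ s, (π s)⁻¹)
      (ae_of_all _ fun ω => by
        rw [Pi.inv_apply, Real.norm_eq_abs, abs_of_pos (inv_pos.2 (hπ_pos _))]
        exact Finset.single_le_sum (fun s _ => (inv_pos.2 (hπ_pos s)).le) (Finset.mem_univ _))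
  have hB_top : MemLp B ∞ μ := memLp_top_of_bound hB.aestronglyMeasurable 1
    (ae_of_all _ fun ω => by
      rw [Real.norm_eq_abs, abs_le]
      constructor <;> linarith [(hB01 ω).1, (hB01 ω).2])
  have hD_top : MemLp D ∞ μ := memLp_top_of_forall_eq_zero_or_eq_one hD hD01
  have hB_int : Integrable B μ := hB_top.integrable le_top
  exact aipwScore_integral_and_variance_le h𝔪le hD hD01 hB_top hp (fun ω => (hπ_pos _).ne')
    (integrable_condExp.congr hbern) hp_inv
    (condExp_sub_ae_eq_zero_of_condExp_ae_eq h𝔪le hp (hD_top.integrable le_top) hbern)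
    (condExp_mul_sub_condExp_ae_eq_zero hD_top hB_int
      (condExp_mul_ae_eq_of_condIndepFun h𝔪le hD hB hD01 hB_int hci))
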